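/- arXiv:1310.2104 — 2 statements merged into one kernel-verified Lean document; each statement's English description precedes it below -/
import Mathlib

section
/- For every nonnegative integer n, Ĉ P_n^{(k)}(x;λ,μ) = Σ_{l=0}^{n} C(n,l) · Ĉ_{n-l}^{(k)} · S_l(x;λ,μ), where Ĉ_m^{(k)} = Ĉ_m^{(k)}(0) are the poly-Cauchy numbers of the second kind. -/
open PowerSeries Finset

noncomputable section

/-- The formal power series log(1+t). -/
def logS : PowerSeries ℝ :=
  PowerSeries.mk fun n => if n = 0 then 0 else (-1) ^ (n + 1) / n

/-- Composition of formal power series (valid when `g` has zero constant term). -/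
def compS (f g : PowerSeries ℝ) : PowerSeries ℝ :=
  PowerSeries.mk fun n =>
    ∑ m ∈ Finset.range (n + 1), (PowerSeries.coeff m f) * PowerSeries.coeff n (g ^ m)

/-- The formal power series (1+t)^x = Σ (x)_n t^n / n!. -/
def onePow (x : ℝ) : PowerSeries ℝ :=
  PowerSeries.mk fun n => (descPochhammer ℝ n).eval x / n.factorial

/-- The polylogarithm factorial function Lif_k(t) = Σ t^n/(n!(n+1)^k). -/
def Lif (k : ℤ) : PowerSeries ℝ :=
  PowerSeries.mk fun n => 1 / (n.factorial * ((n : ℝ) + 1) ^ k)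

/-- The Peters factor (1+(1+t)^λ)^(-μ) = 2^(-μ) exp(-μ log(1 + ((1+t)^λ - 1)/2)). -/
def peters (lam mu : ℝ) : PowerSeries ℝ :=
  PowerSeries.C ((2 : ℝ) ^ (-mu)) *
    compS (PowerSeries.exp ℝ)
      (PowerSeries.C (-mu) * compS logS (PowerSeries.C (1 / 2) * (onePow lam - 1)))

/-- The Peters polynomials S_n(x;λ,μ). -/
def petersPoly (lam mu x : ℝ) (n : ℕ) : ℝ :=
  n.factorial * PowerSeries.coeff n (peters lam mu * onePow x)

/-- Poly-Cauchy polynomials of the first kind C_n^{(k)}(x). -/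
def pC (k : ℤ) (x : ℝ) (n : ℕ) : ℝ :=
  n.factorial * PowerSeries.coeff n (compS (Lif k) logS * onePow (-x))

/-- Poly-Cauchy polynomials of the second kind Ĉ_n^{(k)}(x). -/
def pChat (k : ℤ) (x : ℝ) (n : ℕ) : ℝ :=
  n.factorial * PowerSeries.coeff n (compS (Lif k) (-logS) * onePow x)

/-- The poly-Cauchy of the first kind and Peters mixed-type polynomials CP_n^{(k)}(x;λ,μ). -/
def CP (k : ℤ) (lam mu x : ℝ) (n : ℕ) : ℝ :=
  n.factorial * PowerSeries.coeff n (peters lam mu * compS (Lif k) logS * onePow (-x))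

/-- The poly-Cauchy of the second kind and Peters mixed-type polynomials ĈP_n^{(k)}(x;λ,μ). -/
def CPhat (k : ℤ) (lam mu x : ℝ) (n : ℕ) : ℝ :=
  n.factorial * PowerSeries.coeff n (peters lam mu * compS (Lif k) (-logS) * onePow x)

/-- Signed Stirling numbers of the first kind: (x)_n = Σ_l s(n,l) x^l. -/
def stirS (n l : ℕ) : ℝ := (descPochhammer ℝ n).coeff l

/-! Since `(1+t)^0 = 1`, the numbers `Ĉ_m^{(k)}` are the exponential coefficients of
`Lif_k(-log(1+t))`. The generating function of `ĈP_n^{(k)}` is the product of this series with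
that of the Peters polynomials, and a product of exponential generating functions has the
binomial convolution of the two coefficient sequences as its coefficients. -/

theorem PowerSeries.factorial_mul_coeff_mul {R : Type*} [CommSemiring R] (f g : PowerSeries R)
    (n : ℕ) :
    (n.factorial : R) * coeff n (f * g) =
      ∑ l ∈ range (n + 1),
        (n.choose l : R) * (l.factorial * coeff l f) * ((n - l).factorial * coeff (n - l) g) := by
  rw [coeff_mul, Nat.sum_antidiagonal_eq_sum_range_succ_mk, mul_sum]
  refine sum_congr rfl fun l hl => ?_
  have hfac : (n.choose l : R) * l.factorial * (n - l).factorial = n.factorial := by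
    rw [← Nat.cast_mul, ← Nat.cast_mul,
      Nat.choose_mul_factorial_mul_factorial (Nat.lt_succ_iff.mp (mem_range.mp hl))]
  rw [← hfac]
  ring

theorem onePow_zero : onePow 0 = 1 := by
  ext n
  cases n <;> simp [onePow, coeff_one, descPochhammer_succ_left]

theorem CPhat_eq_sum_polyCauchyNum_mul_peters (k : ℤ) (lam mu x : ℝ) (n : ℕ) :
    CPhat k lam mu x n =
      ∑ l ∈ Finset.range (n + 1),
        (n.choose l : ℝ) * pChat k 0 (n - l) * petersPoly lam mu x l := by
  have hcomm : peters lam mu * compS (Lif k) (-logS) * onePow x =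
      (peters lam mu * onePow x) * compS (Lif k) (-logS) := by ring
  rw [CPhat, hcomm, factorial_mul_coeff_mul]
  refine sum_congr rfl fun l _ => ?_
  rw [pChat, petersPoly, onePow_zero, mul_one, mul_right_comm]
end
end

section
/- For every positive integer n, the derivative formula d/dx Ĉ P_n^{(k)}(x;λ,μ) = n! · Σ_{l=0}^{n-1} ((-1)^{n-l-1} / ((n-l)·l!)) · Ĉ P_l^{(k)}(x;λ,μ) holds. -/
open PowerSeries Finset

noncomputable section

/-!
Writing `(1+t)^x = Σ binom(x,n) tⁿ`, the Chu–Vandermonde identity says `(1+t)^(x+h) = (1+t)^x (1+t)^h`,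
so `∂ₓ (1+t)^x = (1+t)^x · ∂ₕ|₀ (1+t)^h`. Since `binom(h,n) = h(h-1)⋯(h-n+1)/n!` has derivative
`(-1)^(n-1)/n` at `h = 0`, the latter series is `log(1+t)`. Hence the `x`-derivative of the generating
function of `ĈP_n^{(k)}` is `log(1+t)` times that generating function, and comparing coefficients of
`tⁿ` gives the formula.
-/

open Polynomial in
theorem descPochhammer_succ_coeff_one {R : Type*} [CommRing R] (n : ℕ) :
    (descPochhammer R (n + 1)).coeff 1 = (-1) ^ n * n.factorial := by
  induction n with
  | zero => simp
  | succ n ih =>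
    rw [descPochhammer_succ_right, ← C_eq_natCast, coeff_mul_X_sub_C, coeff_zero_eq_eval_zero,
      descPochhammer_ne_zero_eval_zero _ n.succ_ne_zero, ih, Nat.factorial_succ]
    push_cast
    ring

theorem descPochhammer_eval_eq_factorial_mul_choose {K : Type*} [Field K] [CharZero K]
    (x : K) (n : ℕ) : (descPochhammer K n).eval x = n.factorial * Ring.choose x n := by
  rw [Ring.choose_eq_smul, smul_eq_mul, ← mul_assoc,
    mul_inv_cancel₀ (Nat.cast_ne_zero.mpr n.factorial_ne_zero), one_mul,
    ← descPochhammer_map (algebraMap ℤ K), Polynomial.eval_map_algebraMap,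
    Polynomial.aeval_eq_smeval]

theorem coeff_onePow (x : ℝ) (n : ℕ) : coeff n (onePow x) = Ring.choose x n := by
  rw [onePow, coeff_mk, descPochhammer_eval_eq_factorial_mul_choose]
  field_simp

theorem onePow_add (x y : ℝ) : onePow (x + y) = onePow x * onePow y := by
  ext n
  rw [coeff_mul, coeff_onePow, Ring.add_choose_eq n (Commute.all x y)]
  simp only [coeff_onePow]

theorem coeff_logS_zero : coeff 0 logS = 0 := by
  simp [logS]

theorem coeff_logS_succ (n : ℕ) : coeff (n + 1) logS = (-1) ^ n / (n + 1 : ℝ) := by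
  simp [logS, pow_succ]

theorem hasDerivAt_choose_zero (n : ℕ) :
    HasDerivAt (fun y : ℝ => Ring.choose y n) (coeff n logS) 0 := by
  have hfac : (n.factorial : ℝ) ≠ 0 := Nat.cast_ne_zero.mpr n.factorial_ne_zero
  have h := ((descPochhammer ℝ n).hasDerivAt 0).div_const (n.factorial : ℝ)
  simp_rw [descPochhammer_eval_eq_factorial_mul_choose, mul_div_cancel_left₀ _ hfac] at h
  refine h.congr_deriv ?_
  rcases n with _ | n
  · simp [coeff_logS_zero]
  · rw [coeff_logS_succ, ← Polynomial.coeff_zero_eq_eval_zero, Polynomial.coeff_derivative]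
    simp only [zero_add, Nat.cast_zero]
    rw [descPochhammer_succ_coeff_one, Nat.factorial_succ]
    push_cast
    field_simp

theorem hasDerivAt_coeff_onePow (n : ℕ) (x : ℝ) :
    HasDerivAt (fun y => coeff n (onePow y)) (coeff n (logS * onePow x)) x := by
  have hshift : (fun y => coeff n (onePow y)) =
      fun y => ∑ p ∈ antidiagonal n, coeff p.1 (onePow x) * Ring.choose (y - x) p.2 := by
    funext y
    simp_rw [← coeff_onePow]
    rw [← coeff_mul, ← onePow_add, add_sub_cancel]
  rw [hshift, mul_comm, coeff_mul]
  refine HasDerivAt.fun_sum fun p _ => HasDerivAt.const_mul _ ?_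
  exact HasDerivAt.comp_sub_const x x (by simpa using hasDerivAt_choose_zero p.2)

theorem hasDerivAt_coeff_mul_onePow (G : PowerSeries ℝ) (n : ℕ) (x : ℝ) :
    HasDerivAt (fun y => coeff n (G * onePow y)) (coeff n (logS * (G * onePow x))) x := by
  simp only [mul_left_comm logS, PowerSeries.coeff_mul n G]
  exact HasDerivAt.fun_sum fun p _ => (hasDerivAt_coeff_onePow p.2 x).const_mul _

theorem coeff_logS_mul (F : PowerSeries ℝ) (n : ℕ) :
    coeff n (logS * F) = ∑ l ∈ range n, (-1) ^ (n - l - 1) / ((n - l : ℕ) : ℝ) * coeff l F := by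
  rw [mul_comm, coeff_mul, Finset.Nat.sum_antidiagonal_eq_sum_range_succ_mk, sum_range_succ,
    Nat.sub_self, coeff_logS_zero, mul_zero, add_zero]
  refine sum_congr rfl fun l hl => ?_
  obtain ⟨m, hm⟩ : ∃ m, n - l = m + 1 := ⟨n - l - 1, by have := mem_range.mp hl; omega⟩
  rw [hm, coeff_logS_succ, Nat.add_sub_cancel, mul_comm, Nat.cast_succ]

theorem deriv_CPhat_general (k : ℤ) (lam mu x : ℝ) (n : ℕ) :
    deriv (fun y => CPhat k lam mu y n) x =
      (n.factorial : ℝ) *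
        ∑ l ∈ Finset.range n,
          ((-1 : ℝ) ^ (n - l - 1) / ((n - l : ℕ) * (l.factorial : ℝ))) * CPhat k lam mu x l := by
  have hG := hasDerivAt_coeff_mul_onePow (peters lam mu * compS (Lif k) (-logS)) n x
  simp only [CPhat]
  rw [(hG.const_mul _).deriv, coeff_logS_mul]
  congr 1
  refine sum_congr rfl fun l _ => ?_
  have : (l.factorial : ℝ) ≠ 0 := by positivity
  field_simp

theorem deriv_CPhat (k : ℤ) (lam mu x : ℝ) (n : ℕ) (hn : 0 < n) :
    deriv (fun y => CPhat k lam mu y n) x =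
      (n.factorial : ℝ) *
        ∑ l ∈ Finset.range n,
          ((-1 : ℝ) ^ (n - l - 1) / ((n - l : ℕ) * (l.factorial : ℝ))) * CPhat k lam mu x l :=
  deriv_CPhat_general k lam mu x n
end
end
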